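/- Let s : ℝ≥0 × ℝⁿ → ℝⁿ be a measurable family of time-t maps s_t, let h₀ : ℝⁿ → ℝ≥0 be a measurable initial density, μ₀ = Leb.withDensity h₀, and let ρ(x) = ∫_{(0,∞)} ψ_t(x) dt be the occupancy density, where ψ_t is a measurable density of (s_t)_*μ₀ with (t,x) ↦ ψ_t(x) jointly measurable. Then for any measurable unsafe set X_u ⊆ ℝⁿ, the zero-occupancy condition ∫_{X_u} ρ(x) dx = 0 holds if and only if for μ₀-almost every initial point x₀, ∫_{(0,∞)} 1_{X_u}(s_t(x₀)) dt = 0; i.e., almost every trajectory spends zero time in the unsafe set. -/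

import Mathlib

open MeasureTheory Measure
open scoped ENNReal

/-! Since `ψ t` is a density of `(s t)_* μ₀`, the mass it gives to `X_u` is `μ₀ (s t ⁻¹' X_u)`,
the integral over `μ₀` of the indicator of `X_u` along the trajectories at time `t`. Integrating
over `t` and swapping the two integrals by Tonelli, the occupancy of `X_u` is the `μ₀`-integral of
the time each trajectory spends in `X_u`, and a nonnegative measurable function has zero integral
iff it vanishes almost everywhere. -/

theorem setLIntegral_density_eq_measure_preimage {α β : Type*} [MeasurableSpace α]
    [MeasurableSpace β] {μ : Measure α} {ν : Measure β} {f : α → β} {g : β → ℝ≥0∞}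
    (hf : Measurable f) (hmap : μ.map f = ν.withDensity g) {A : Set β} (hA : MeasurableSet A) :
    ∫⁻ y in A, g y ∂ν = μ (f ⁻¹' A) := by
  rw [← withDensity_apply _ hA, ← hmap, map_apply hf hA]

theorem setLIntegral_occupancy_eq_lintegral_sojourn {τ α β : Type*} [MeasurableSpace τ]
    [MeasurableSpace α] [MeasurableSpace β] {ν : Measure τ} {μ : Measure α} {η : Measure β}
    [SFinite ν] [SFinite μ] [SFinite η]
    {s : τ × α → β} (hs : Measurable s) {ψ : τ × β → ℝ≥0∞} (hψ : Measurable ψ)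
    (hpush : ∀ᵐ t ∂ν, μ.map (fun x => s (t, x)) = η.withDensity (fun y => ψ (t, y)))
    {A : Set β} (hA : MeasurableSet A) :
    ∫⁻ y in A, ∫⁻ t, ψ (t, y) ∂ν ∂η =
      ∫⁻ x, ∫⁻ t, A.indicator (fun _ => 1) (s (t, x)) ∂ν ∂μ := by
  have hvisit : Measurable fun p : τ × α => A.indicator (fun _ => (1 : ℝ≥0∞)) (s p) :=
    (measurable_one.indicator hA).comp hs
  calc ∫⁻ y in A, ∫⁻ t, ψ (t, y) ∂ν ∂η
      = ∫⁻ t, ∫⁻ y in A, ψ (t, y) ∂η ∂ν :=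
        lintegral_lintegral_swap (hψ.comp measurable_swap).aemeasurable
    _ = ∫⁻ t, ∫⁻ x, A.indicator (fun _ => 1) (s (t, x)) ∂μ ∂ν := by
        refine lintegral_congr_ae (hpush.mono fun t ht => ?_)
        have hst : Measurable fun x => s (t, x) := hs.comp measurable_prodMk_left
        dsimp only
        rw [setLIntegral_density_eq_measure_preimage hst ht hA,
          lintegral_indicator_const_comp hst hA, one_mul]
    _ = ∫⁻ x, ∫⁻ t, A.indicator (fun _ => 1) (s (t, x)) ∂ν ∂μ :=
        lintegral_lintegral_swap hvisit.aemeasurable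

theorem zero_occupancy_iff_ae_safe_general {n : ℕ}
    (s : ℝ × (Fin n → ℝ) → (Fin n → ℝ)) (hs : Measurable s)
    (h₀ : (Fin n → ℝ) → ℝ≥0∞)
    (ψ : ℝ × (Fin n → ℝ) → ℝ≥0∞) (hψ : Measurable ψ)
    (hpush : ∀ t : ℝ, 0 ≤ t →
      Measure.map (fun x => s (t, x)) (volume.withDensity h₀)
        = volume.withDensity (fun x => ψ (t, x)))
    (ρ : (Fin n → ℝ) → ℝ≥0∞)
    (hρ : ∀ x, ρ x = ∫⁻ t in Set.Ioi (0 : ℝ), ψ (t, x))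
    (Xu : Set (Fin n → ℝ)) (hXu : MeasurableSet Xu) :
    (∫⁻ x in Xu, ρ x) = 0 ↔
      ∀ᵐ x₀ ∂(volume.withDensity h₀),
        (∫⁻ t in Set.Ioi (0 : ℝ), Xu.indicator (fun _ => (1 : ℝ≥0∞)) (s (t, x₀))) = 0 := by
  have hpush_ae : ∀ᵐ t ∂volume.restrict (Set.Ioi (0 : ℝ)),
      (volume.withDensity h₀).map (fun x => s (t, x)) = volume.withDensity (fun y => ψ (t, y)) :=
    ae_restrict_of_forall_mem measurableSet_Ioi fun t ht => hpush t ht.le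
  have hvisit : Measurable fun p => Xu.indicator (fun _ => (1 : ℝ≥0∞)) (s p) :=
    (measurable_one.indicator hXu).comp hs
  rw [funext hρ, setLIntegral_occupancy_eq_lintegral_sojourn hs hψ hpush_ae hXu,
    lintegral_eq_zero_iff hvisit.lintegral_prod_left]
  rfl

/-- **Zero occupancy ⇔ almost-sure safety.** With `ρ` the occupancy density of the family of
time-`t` maps `s t` and initial density `h₀`, the occupancy of a measurable unsafe set `X_u`
vanishes iff for `μ₀`-almost every initial point the trajectory spends zero time in `X_u`. -/
theorem zero_occupancy_iff_ae_safe {n : ℕ}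
    (s : ℝ × (Fin n → ℝ) → (Fin n → ℝ)) (hs : Measurable s)
    (h₀ : (Fin n → ℝ) → ℝ≥0∞) (hh₀ : Measurable h₀)
    (ψ : ℝ × (Fin n → ℝ) → ℝ≥0∞) (hψ : Measurable ψ)
    (hpush : ∀ t : ℝ, 0 ≤ t →
      Measure.map (fun x => s (t, x)) (volume.withDensity h₀)
        = volume.withDensity (fun x => ψ (t, x)))
    (ρ : (Fin n → ℝ) → ℝ≥0∞)
    (hρ : ∀ x, ρ x = ∫⁻ t in Set.Ioi (0 : ℝ), ψ (t, x))
    (Xu : Set (Fin n → ℝ)) (hXu : MeasurableSet Xu) :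
    (∫⁻ x in Xu, ρ x) = 0 ↔
      ∀ᵐ x₀ ∂(volume.withDensity h₀),
        (∫⁻ t in Set.Ioi (0 : ℝ), Xu.indicator (fun _ => (1 : ℝ≥0∞)) (s (t, x₀))) = 0 :=
  zero_occupancy_iff_ae_safe_general s hs h₀ ψ hψ hpush ρ hρ Xu hXu
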